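/- Let R be a commutative ring, n ≥ 2, and let a ∈ Um_n(R) be a unimodular row with section b (i.e. ∑ a_i b_i = 1). Then the Suslin matrix α_n(a,b) is an invertible matrix of determinant 1, i.e. α_n(a,b) ∈ SL_{2^{n-1}}(R). -/
import Mathlib


open Matrix

variable {R : Type*} [CommRing R]

/-- A matrix is alternating if its transpose is its negative and its diagonal vanishes. -/
def IsAltMat {n : Type*} [Fintype n] [DecidableEq n] (M : Matrix n n R) : Prop :=
  Mᵀ = -M ∧ ∀ i, M i i = 0

/-- Block-diagonal (orthogonal) sum of two square matrices. -/
def bd {m n : ℕ} (A : Matrix (Fin m) (Fin m) R) (B : Matrix (Fin n) (Fin n) R) :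
    Matrix (Fin (m + n)) (Fin (m + n)) R :=
  Matrix.reindex finSumFinEquiv finSumFinEquiv (Matrix.fromBlocks A 0 0 B)

/-- The standard symplectic matrix ψ₂ ⊥ ... ⊥ ψ₂. -/
def psiMat (k : ℕ) : Matrix (Fin k) (Fin k) R :=
  Matrix.of fun i j =>
    if (i : ℕ) + 1 = (j : ℕ) ∧ Even (i : ℕ) then 1
    else if (j : ℕ) + 1 = (i : ℕ) ∧ Even (j : ℕ) then -1 else 0

/-- The matrix σ₂ ⊥ ... ⊥ σ₂ with σ₂ = [[0,1],[1,0]]. -/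
def sigmaMat (k : ℕ) : Matrix (Fin k) (Fin k) R :=
  Matrix.of fun i j =>
    if ((i : ℕ) + 1 = (j : ℕ) ∧ Even (i : ℕ)) ∨ ((j : ℕ) + 1 = (i : ℕ) ∧ Even (j : ℕ)) then 1
    else 0

/-- The elementary subgroup `E_N(R)`, realized as the submonoid of the matrix ring
generated by elementary (transvection) matrices. -/
def Esub (N : ℕ) : Submonoid (Matrix (Fin N) (Fin N) R) :=
  Submonoid.closure {M | ∃ (i j : Fin N) (c : R), i ≠ j ∧ M = Matrix.transvection i j c}

/-- The Pfaffian of a square matrix, by expansion along the first row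
(it is the usual Pfaffian on alternating matrices of even size). -/
def pfaffian : (n : ℕ) → Matrix (Fin n) (Fin n) R → R
  | 0, _ => 1
  | 1, _ => 0
  | (n + 2), A =>
      ∑ j : Fin (n + 1),
        (-1) ^ (j : ℕ) * A 0 j.succ *
          pfaffian n (A.submatrix (fun i => (j.succAbove i).succ)
            (fun i => (j.succAbove i).succ))

/-- Suslin matrices: `suslin n a b` is the Suslin matrix `α_{n+1}(a,b)` of size `2^n`. -/
def suslin : (n : ℕ) → (Fin (n + 1) → R) → (Fin (n + 1) → R) →
    Matrix (Fin (2 ^ n)) (Fin (2 ^ n)) R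
  | 0, a, _ => Matrix.of fun _ _ => a 0
  | (n + 1), a, b =>
      Matrix.reindex (finSumFinEquiv.trans (finCongr (by ring)))
        (finSumFinEquiv.trans (finCongr (by ring)))
        (Matrix.fromBlocks (a 0 • (1 : Matrix (Fin (2 ^ n)) (Fin (2 ^ n)) R))
          (suslin n (fun i => a i.succ) (fun i => b i.succ))
          (-(suslin n (fun i => b i.succ) (fun i => a i.succ))ᵀ)
          (b 0 • (1 : Matrix (Fin (2 ^ n)) (Fin (2 ^ n)) R)))

/-- Stabilized invertible alternating matrices: pairs of a rank and a matrix of that even rank. -/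
abbrev Sig (R : Type*) [CommRing R] := Σ n : ℕ, Matrix (Fin (2 * n)) (Fin (2 * n)) R

/-- The equivalence relation defining `W'_E(R)`: `M ~ N` iff
`M ⊥ ψ_{2n+2s} = Eᵗ (N ⊥ ψ_{2m+2s}) E` for some `s ≥ 1` and elementary `E`. -/
def altRel (x y : Sig R) : Prop :=
  ∃ s : ℕ, 1 ≤ s ∧ ∃ ε ∈ Esub (R := R) (2 * x.1 + 2 * y.1 + 2 * s),
    Matrix.reindex (finCongr (by omega)) (finCongr (by omega))
        (bd x.2 (psiMat (2 * y.1 + 2 * s))) =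
      εᵀ * Matrix.reindex (finCongr (by omega)) (finCongr (by omega))
        (bd y.2 (psiMat (2 * x.1 + 2 * s))) * ε

/-- Orthogonal sum on stabilized matrices. -/
def oplus (x y : Sig R) : Sig R :=
  ⟨x.1 + y.1, Matrix.reindex (finCongr (by ring)) (finCongr (by ring)) (bd x.2 y.2)⟩

/-- The fundamental Suslin identities, proved jointly by induction. -/
theorem suslin_mul_aux : ∀ (n : ℕ) (a b : Fin (n + 1) → R),
    suslin n a b * (suslin n b a)ᵀ = (∑ i, a i * b i) • 1 ∧
    (suslin n b a)ᵀ * suslin n a b = (∑ i, a i * b i) • 1 := by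
  intro n
  induction n with
  | zero =>
      intro a b
      constructor <;>
      · ext i j
        have hij : i = j := by omega
        simp [suslin, Matrix.mul_apply, Fin.sum_univ_one, hij,
          Matrix.one_apply, mul_comm]
  | succ n ih =>
      intro a b
      have h1 := (ih (fun i : Fin (n + 1) => a i.succ) (fun i : Fin (n + 1) => b i.succ)).1
      have h2 := (ih (fun i : Fin (n + 1) => a i.succ) (fun i : Fin (n + 1) => b i.succ)).2
      have hsum : (∑ i, a i * b i) =
          a 0 * b 0 + ∑ i : Fin (n + 1), a i.succ * b i.succ := Fin.sum_univ_succ _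
      constructor <;>
      · simp only [suslin, Matrix.reindex_apply, Matrix.transpose_submatrix,
          Matrix.submatrix_mul_equiv, Matrix.fromBlocks_transpose,
          Matrix.fromBlocks_multiply, Matrix.transpose_smul, Matrix.transpose_one,
          Matrix.transpose_neg, Matrix.transpose_transpose]
        rw [hsum, ← Matrix.reindex_apply, Equiv.apply_eq_iff_eq_symm_apply,
          Matrix.reindex_symm, Matrix.reindex_apply]
        simp only [Matrix.submatrix_smul, Pi.smul_apply, Equiv.symm_symm,
          Matrix.submatrix_one_equiv]
        rw [← Matrix.fromBlocks_one, Matrix.fromBlocks_smul]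
        refine Matrix.fromBlocks_inj.mpr ⟨?_, ?_, ?_, ?_⟩ <;>
        · simp only [Matrix.smul_mul, Matrix.mul_smul, Matrix.one_mul,
            Matrix.mul_one, Matrix.neg_mul, Matrix.mul_neg, neg_neg, smul_smul,
            h1, h2]
          module

/-- Suslin matrices commute with ring homomorphisms. -/
theorem suslin_map {S : Type*} [CommRing S] (f : R →+* S) :
    ∀ (n : ℕ) (a b : Fin (n + 1) → R),
      (suslin n a b).map f = suslin n (f ∘ a) (f ∘ b) := by
  intro n
  induction n with
  | zero => intro a b; ext i j; simp [suslin]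
  | succ n ih =>
      intro a b
      have hneg : ∀ (M : Matrix (Fin (2 ^ n)) (Fin (2 ^ n)) R),
          (-M).map f = -(M.map f) := by intro M; ext i j; simp
      have hsm : ∀ (r : R),
          ((r • (1 : Matrix (Fin (2 ^ n)) (Fin (2 ^ n)) R)).map f) = f r • 1 := by
        intro r; ext i j; simp [Matrix.one_apply, apply_ite f]
      simp only [suslin, Matrix.reindex_apply, ← Matrix.submatrix_map,
        Matrix.fromBlocks_map, hneg, Matrix.transpose_map, hsm, ih]
      rfl

theorem suslin_det (n : ℕ) (a b : Fin (n + 2) → R) :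
    (suslin (n + 1) a b).det = (∑ i, a i * b i) ^ (2 ^ n) := by
  obtain ⟨X, Y, f, hfa, hfb, hY0⟩ :
      ∃ (X Y : Fin (n + 2) → MvPolynomial (Fin (n + 2) × Bool) ℤ)
        (f : MvPolynomial (Fin (n + 2) × Bool) ℤ →+* R),
          ⇑f ∘ X = a ∧ ⇑f ∘ Y = b ∧ (Y 0) ^ (2 ^ n) ≠ 0 := by
    refine ⟨fun i => MvPolynomial.X (i, true), fun i => MvPolynomial.X (i, false),
      (MvPolynomial.aeval
        (fun p : Fin (n + 2) × Bool => if p.2 then a p.1 else b p.1)).toRingHom,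
      ?_, ?_, pow_ne_zero _ (MvPolynomial.X_ne_zero _)⟩
    · funext i; simp
    · funext i; simp
  have key : (suslin (n + 1) X Y).det = (∑ i, X i * Y i) ^ (2 ^ n) := by
    set B := suslin n (fun i : Fin (n + 1) => X i.succ) (fun i : Fin (n + 1) => Y i.succ)
      with hB
    set C := -(suslin n (fun i : Fin (n + 1) => Y i.succ)
      (fun i : Fin (n + 1) => X i.succ))ᵀ with hC
    have hBC : B * C = -((∑ i : Fin (n + 1), X i.succ * Y i.succ) • 1) := by
      rw [hB, hC, Matrix.mul_neg,
        (suslin_mul_aux n (fun i : Fin (n + 1) => X i.succ)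
          (fun i : Fin (n + 1) => Y i.succ)).1]
    have hdet1 : (suslin (n + 1) X Y).det =
        (Matrix.fromBlocks (X 0 • 1) B C (Y 0 • 1)).det := by
      rw [suslin, Matrix.det_reindex_self]
    have hmul : Matrix.fromBlocks (X 0 • 1) B C (Y 0 • 1) *
          Matrix.fromBlocks (Y 0 • 1) 0 (-C) 1 =
        Matrix.fromBlocks ((∑ i, X i * Y i) • 1) B 0 (Y 0 • 1) := by
      rw [Matrix.fromBlocks_multiply]
      have hs : (∑ i, X i * Y i) =
          X 0 * Y 0 + ∑ i : Fin (n + 1), X i.succ * Y i.succ := Fin.sum_univ_succ _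
      refine Matrix.fromBlocks_inj.mpr ⟨?_, ?_, ?_, ?_⟩
      · rw [hs, Matrix.mul_neg, hBC, neg_neg, Matrix.smul_mul, Matrix.one_mul,
          smul_smul, add_smul]
      · rw [Matrix.mul_zero, zero_add, Matrix.mul_one]
      · rw [Matrix.mul_smul, Matrix.mul_one, Matrix.mul_neg, Matrix.smul_mul,
          Matrix.one_mul, add_neg_cancel]
      · rw [Matrix.mul_zero, zero_add, Matrix.mul_one]
    have hdet2 : (suslin (n + 1) X Y).det * (Y 0) ^ (2 ^ n) =
        (∑ i, X i * Y i) ^ (2 ^ n) * (Y 0) ^ (2 ^ n) := by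
      have := congrArg Matrix.det hmul
      simp only [Matrix.det_mul, Matrix.det_fromBlocks_zero₁₂,
        Matrix.det_fromBlocks_zero₂₁, Matrix.det_one, Matrix.det_smul,
        Finset.card_univ, Fintype.card_fin, mul_one, one_mul] at this
      rw [hdet1]
      exact this
    exact mul_right_cancel₀ hY0 hdet2
  have := congrArg f key
  rw [RingHom.map_det, RingHom.mapMatrix_apply, suslin_map f, hfa, hfb] at this
  rw [this, map_pow, map_sum]
  congr 1
  refine Finset.sum_congr rfl fun i _ => ?_
  rw [_root_.map_mul, ← Function.comp_apply (f := ⇑f) (g := X),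
    ← Function.comp_apply (f := ⇑f) (g := Y), hfa, hfb]

/-- If `a` is a unimodular row with section `b` (i.e. `∑ aᵢbᵢ = 1`), then the Suslin matrix
`α_n(a,b)` (here `suslin m a b = α_{m+1}(a,b)` with `m ≥ 1`) lies in `SL_{2^{n-1}}(R)`. -/
theorem suslin_mem_SL {R : Type*} [CommRing R] (m : ℕ) (hm : 1 ≤ m)
    (a b : Fin (m + 1) → R)
    (hunim : ∃ c : Fin (m + 1) → R, ∑ i, c i * a i = 1)
    (hsec : ∑ i, a i * b i = 1) :
    IsUnit (suslin m a b) ∧ (suslin m a b).det = 1 := by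
  obtain ⟨h1, h2⟩ := suslin_mul_aux m a b
  rw [hsec, one_smul] at h1 h2
  constructor
  · exact ⟨⟨suslin m a b, (suslin m b a)ᵀ, h1, h2⟩, rfl⟩
  · obtain ⟨k, rfl⟩ : ∃ k, m = k + 1 := ⟨m - 1, by omega⟩
    rw [suslin_det k a b, hsec, one_pow]
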